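/- arXiv:1504.04539 — 4 statements merged into one kernel-verified Lean document; each statement's English description precedes it below -/
import Mathlib

section
/- Cauchy-theorem step of the vanishing lemma: Let s > 1, C > 0, let F ⊂ ℝ be a finite set, and let H be a ℂ^{2×2}-valued function that is analytic on the open upper half-plane {Im z > 0}, extends continuously to {Im z ≥ 0}∖F, satisfies ‖H(z)‖ ≤ C(1+|z|)^{−s} for all z with Im z ≥ 0, z ∉ F, and satisfies ‖H(z)‖ = O(|log|z−a||) as z → a for each a ∈ F. Then the (entrywise) integral over ℝ of the boundary values of H vanishes: ∫_ℝ H₊(x) dx = 0. -/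
open Complex Filter Topology MeasureTheory

noncomputable section

abbrev M2 : Type := Matrix (Fin 2) (Fin 2) ℂ

/-! By Cauchy's theorem on rectangles, whose vertical sides vanish in the limit thanks to the
decay, the line integral `∫ f (x + ε i) dx` does not depend on `ε > 0`. Trading part of the decay
in `|x|` for decay in `ε` shows that it tends to `0` as `ε → ∞`, so it vanishes identically.
Dominated convergence, with dominant `C (1 + |x|)^(-s)`, then carries this to the boundary
`ε → 0⁺`, where the boundary values are the limits for all `x` outside the null set `F`. -/

open Set

lemma integrable_one_add_abs_rpow_neg {s : ℝ} (hs : 1 < s) :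
    Integrable (fun x : ℝ => (1 + |x|) ^ (-s)) := by
  simpa [Real.norm_eq_abs] using
    integrable_one_add_norm (E := ℝ) (μ := volume) (r := s) (by simpa using hs)

lemma one_add_norm_rpow_neg_le {z : ℂ} {s t : ℝ} (hz : 0 ≤ z.im) (ht : 0 ≤ t) (hts : t ≤ s) :
    (1 + ‖z‖) ^ (-s) ≤ (1 + z.im) ^ (-(s - t)) * (1 + |z.re|) ^ (-t) := by
  have hre : 1 + |z.re| ≤ 1 + ‖z‖ := by linarith [abs_re_le_norm z]
  have him : 1 + z.im ≤ 1 + ‖z‖ := by linarith [abs_im_le_norm z, le_abs_self z.im]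
  calc (1 + ‖z‖) ^ (-s) = (1 + ‖z‖) ^ (-(s - t)) * (1 + ‖z‖) ^ (-t) := by
        rw [← Real.rpow_add (by positivity)]; ring_nf
    _ ≤ (1 + z.im) ^ (-(s - t)) * (1 + |z.re|) ^ (-t) := by
        refine mul_le_mul (Real.rpow_le_rpow_of_nonpos (by positivity) him (by linarith))
          (Real.rpow_le_rpow_of_nonpos (by positivity) hre (by linarith)) (by positivity)
          (by positivity)

lemma tendsto_ofReal_add_mul_I_nhdsGT (x : ℝ) :
    Tendsto (fun ε : ℝ => (x : ℂ) + ε * I) (𝓝[>] 0) (𝓝[{z | 0 < z.im}] (x : ℂ)) := by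
  refine tendsto_nhdsWithin_iff.mpr ⟨?_, ?_⟩
  · have hc : Continuous (fun ε : ℝ => (x : ℂ) + ε * I) := by fun_prop
    simpa using (hc.tendsto 0).mono_left nhdsWithin_le_nhds
  · filter_upwards [self_mem_nhdsWithin] with ε (hε : (0 : ℝ) < ε)
    simpa using hε

section UpperHalfPlane

variable {E : Type*} [NormedAddCommGroup E] {f : ℂ → E} {s C : ℝ}

lemma norm_comp_add_mul_I_le {t : ℝ} (hC : 0 ≤ C)
    (hdecay : ∀ z : ℂ, 0 < z.im → ‖f z‖ ≤ C * (1 + ‖z‖) ^ (-s)) (ht : 0 ≤ t) (hts : t ≤ s)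
    {x ε : ℝ} (hε : 0 < ε) :
    ‖f (x + ε * I)‖ ≤ C * (1 + ε) ^ (-(s - t)) * (1 + |x|) ^ (-t) := by
  have hz : 0 < ((x : ℂ) + ε * I).im := by simpa using hε
  calc ‖f (x + ε * I)‖ ≤ C * (1 + ‖(x : ℂ) + ε * I‖) ^ (-s) := hdecay _ hz
    _ ≤ C * (1 + ε) ^ (-(s - t)) * (1 + |x|) ^ (-t) := by
      simpa [mul_assoc] using mul_le_mul_of_nonneg_left (one_add_norm_rpow_neg_le hz.le ht hts) hC

lemma norm_comp_add_mul_I_le_of_nonneg (hC : 0 ≤ C)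
    (hdecay : ∀ z : ℂ, 0 < z.im → ‖f z‖ ≤ C * (1 + ‖z‖) ^ (-s)) (hs : 0 ≤ s) {x ε : ℝ}
    (hε : 0 < ε) : ‖f (x + ε * I)‖ ≤ C * (1 + |x|) ^ (-s) := by
  simpa using norm_comp_add_mul_I_le (x := x) hC hdecay hs le_rfl hε

variable [NormedSpace ℂ E]

lemma continuous_comp_add_mul_I (hf : DifferentiableOn ℂ f {z | 0 < z.im}) {ε : ℝ}
    (hε : 0 < ε) : Continuous (fun x : ℝ => f (x + ε * I)) :=
  hf.continuousOn.comp_continuous (by fun_prop) fun x => by simpa using hε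

lemma integrable_comp_add_mul_I (hf : DifferentiableOn ℂ f {z | 0 < z.im}) (hs : 1 < s)
    (hC : 0 ≤ C) (hdecay : ∀ z : ℂ, 0 < z.im → ‖f z‖ ≤ C * (1 + ‖z‖) ^ (-s)) {ε : ℝ}
    (hε : 0 < ε) : Integrable (fun x : ℝ => f (x + ε * I)) :=
  ((integrable_one_add_abs_rpow_neg hs).const_mul C).mono'
    (continuous_comp_add_mul_I hf hε).aestronglyMeasurable
    (.of_forall fun _ => norm_comp_add_mul_I_le_of_nonneg hC hdecay (by linarith) hε)

lemma tendsto_intervalIntegral_vertical (hs : 0 < s) (hC : 0 ≤ C)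
    (hdecay : ∀ z : ℂ, 0 < z.im → ‖f z‖ ≤ C * (1 + ‖z‖) ^ (-s)) {a b : ℝ} (ha : 0 < a)
    (hb : 0 < b) {l : Filter ℝ} (hl : Tendsto (fun u => |u|) l atTop) :
    Tendsto (fun u : ℝ => ∫ y in a..b, f (u + y * I)) l (𝓝 0) := by
  have hbound : Tendsto (fun u : ℝ => C * (1 + |u|) ^ (-s) * |b - a|) l (𝓝 0) := by
    simpa using (((tendsto_rpow_neg_atTop hs).comp
      (tendsto_atTop_add_const_left _ 1 hl)).const_mul C).mul_const |b - a|
  refine squeeze_zero_norm (fun u => intervalIntegral.norm_integral_le_of_norm_le_const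
    fun y hy => ?_) hbound
  exact norm_comp_add_mul_I_le_of_nonneg hC hdecay hs.le ((lt_min ha hb).trans hy.1)

lemma integral_comp_add_mul_I_eq (hf : DifferentiableOn ℂ f {z | 0 < z.im}) (hs : 1 < s)
    (hC : 0 ≤ C) (hdecay : ∀ z : ℂ, 0 < z.im → ‖f z‖ ≤ C * (1 + ‖z‖) ^ (-s)) {a b : ℝ}
    (ha : 0 < a) (hb : 0 < b) :
    ∫ x : ℝ, f (x + a * I) = ∫ x : ℝ, f (x + b * I) := by
  have hrect : ∀ R : ℝ,
      (∫ x : ℝ in -R..R, f (x + a * I)) - (∫ x : ℝ in -R..R, f (x + b * I)) +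
        I • (∫ y : ℝ in a..b, f (R + y * I)) -
        I • (∫ y : ℝ in a..b, f ((-R : ℝ) + y * I)) = 0 := by
    intro R
    have hsub : uIcc a b ⊆ Ioi 0 := fun y hy => (lt_min ha hb).trans_le hy.1
    simpa using integral_boundary_rect_eq_zero_of_differentiableOn f ((-R : ℝ) + a * I)
      (R + b * I) (hf.mono fun z hz => by simpa using hsub (by simpa using hz.2))
  have hlim_a := intervalIntegral_tendsto_integral (integrable_comp_add_mul_I hf hs hC hdecay ha)
    tendsto_neg_atTop_atBot tendsto_id
  have hlim_b := intervalIntegral_tendsto_integral (integrable_comp_add_mul_I hf hs hC hdecay hb)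
    tendsto_neg_atTop_atBot tendsto_id
  have hright := tendsto_intervalIntegral_vertical (by linarith) hC hdecay ha hb
    tendsto_abs_atTop_atTop
  have hleft := (tendsto_intervalIntegral_vertical (by linarith) hC hdecay ha hb
    tendsto_abs_atBot_atTop).comp tendsto_neg_atTop_atBot
  have hlim := ((hlim_a.sub hlim_b).add (hright.const_smul I)).sub (hleft.const_smul I)
  simp only [smul_zero, add_zero, sub_zero] at hlim
  exact sub_eq_zero.mp <|
    tendsto_nhds_unique hlim (tendsto_const_nhds.congr fun R => (hrect R).symm)

lemma tendsto_integral_comp_add_mul_I_atTop (hs : 1 < s) (hC : 0 ≤ C)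
    (hdecay : ∀ z : ℂ, 0 < z.im → ‖f z‖ ≤ C * (1 + ‖z‖) ^ (-s)) :
    Tendsto (fun ε : ℝ => ∫ x : ℝ, f (x + ε * I)) atTop (𝓝 0) := by
  obtain ⟨t, ht1, hts⟩ := exists_between hs
  set K := ∫ x : ℝ, (1 + |x|) ^ (-t)
  have hbound : Tendsto (fun ε : ℝ => C * (1 + ε) ^ (-(s - t)) * K) atTop (𝓝 0) := by
    simpa using (((tendsto_rpow_neg_atTop (by linarith : 0 < s - t)).comp
      (tendsto_atTop_add_const_left _ 1 tendsto_id)).const_mul C).mul_const K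
  refine squeeze_zero_norm' ?_ hbound
  filter_upwards [eventually_gt_atTop 0] with ε hε
  rw [← integral_const_mul]
  exact norm_integral_le_of_norm_le ((integrable_one_add_abs_rpow_neg (by linarith)).const_mul _)
    (.of_forall fun x => norm_comp_add_mul_I_le hC hdecay (by linarith) (by linarith) hε)

lemma integral_comp_add_mul_I_eq_zero (hf : DifferentiableOn ℂ f {z | 0 < z.im}) (hs : 1 < s)
    (hC : 0 ≤ C) (hdecay : ∀ z : ℂ, 0 < z.im → ‖f z‖ ≤ C * (1 + ‖z‖) ^ (-s)) {ε : ℝ}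
    (hε : 0 < ε) : ∫ x : ℝ, f (x + ε * I) = 0 :=
  tendsto_nhds_unique (tendsto_const_nhds.congr' <| (eventually_gt_atTop 0).mono
    fun _ hb => integral_comp_add_mul_I_eq hf hs hC hdecay hε hb)
    (tendsto_integral_comp_add_mul_I_atTop hs hC hdecay)

theorem integral_ofReal_eq_zero_of_upperHalfPlane (hf : DifferentiableOn ℂ f {z | 0 < z.im})
    (hs : 1 < s) (hC : 0 ≤ C) (hdecay : ∀ z : ℂ, 0 < z.im → ‖f z‖ ≤ C * (1 + ‖z‖) ^ (-s))
    (hboundary : ∀ᵐ x : ℝ, Tendsto (fun ε : ℝ => f (x + ε * I)) (𝓝[>] 0) (𝓝 (f x))) :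
    ∫ x : ℝ, f x = 0 := by
  have hlim : Tendsto (fun ε : ℝ => ∫ x : ℝ, f (x + ε * I)) (𝓝[>] 0) (𝓝 (∫ x : ℝ, f x)) :=
    tendsto_integral_filter_of_dominated_convergence _
      (eventually_mem_nhdsWithin.mono fun _ hε =>
        (continuous_comp_add_mul_I hf hε).aestronglyMeasurable)
      (eventually_mem_nhdsWithin.mono fun _ hε => .of_forall fun _ =>
        norm_comp_add_mul_I_le_of_nonneg hC hdecay (by linarith) hε)
      ((integrable_one_add_abs_rpow_neg hs).const_mul C) hboundary
  refine tendsto_nhds_unique hlim (tendsto_const_nhds.congr' ?_)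
  exact eventually_mem_nhdsWithin.mono fun _ hε =>
    (integral_comp_add_mul_I_eq_zero hf hs hC hdecay hε).symm

end UpperHalfPlane

theorem cauchy_step_general (s C : ℝ) (hs : 1 < s) (hC : 0 < C) (F : Set ℝ) (hF : F.Finite)
    (H : ℂ → M2)
    (hanal : ∀ i j, DifferentiableOn ℂ (fun z => H z i j) {z : ℂ | 0 < z.im})
    (hcont : ∀ i j, ContinuousOn (fun z => H z i j)
      ({z : ℂ | 0 ≤ z.im} \ ((fun x : ℝ => (x : ℂ)) '' F)))
    (hbound : ∀ z : ℂ, 0 ≤ z.im → z ∉ (fun x : ℝ => (x : ℂ)) '' F →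
      ∀ i j, ‖H z i j‖ ≤ C * (1 + ‖z‖) ^ (-s)) :
    ∀ i j, ∫ x : ℝ, H (x : ℂ) i j = 0 := by
  intro i j
  have hsub : {z : ℂ | 0 < z.im} ⊆ {z : ℂ | 0 ≤ z.im} \ ((fun x : ℝ => (x : ℂ)) '' F) :=
    fun z (hz : 0 < z.im) => ⟨hz.le, by rintro ⟨y, -, rfl⟩; simp at hz⟩
  have hdecay : ∀ z : ℂ, 0 < z.im → ‖H z i j‖ ≤ C * (1 + ‖z‖) ^ (-s) := fun z hz =>
    hbound z (hsub hz).1 (hsub hz).2 i j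
  refine integral_ofReal_eq_zero_of_upperHalfPlane (hanal i j) hs hC.le hdecay ?_
  filter_upwards [hF.countable.ae_notMem volume] with x hx
  have hxD : (x : ℂ) ∈ {z : ℂ | 0 ≤ z.im} \ ((fun x : ℝ => (x : ℂ)) '' F) :=
    ⟨by simp, by rintro ⟨y, hy, hyx⟩; exact hx (ofReal_injective hyx ▸ hy)⟩
  exact ((hcont i j _ hxD).mono hsub).tendsto.comp (tendsto_ofReal_add_mul_I_nhdsGT x)

/-- **Cauchy-theorem step of the vanishing lemma.** Let `s > 1`, `C > 0`, `F ⊂ ℝ` finite, and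
let `H` be a `2×2` matrix valued function, analytic on the open upper half-plane, continuous
up to the boundary away from `F`, with `‖H(z)‖ ≤ C (1+|z|)^{−s}` and at worst logarithmic
singularities at the points of `F`.  Then the entrywise integral of its boundary values over
`ℝ` vanishes. -/
theorem cauchy_step (s C : ℝ) (hs : 1 < s) (hC : 0 < C) (F : Set ℝ) (hF : F.Finite)
    (H : ℂ → M2)
    (hanal : ∀ i j, DifferentiableOn ℂ (fun z => H z i j) {z : ℂ | 0 < z.im})
    (hcont : ∀ i j, ContinuousOn (fun z => H z i j)
      ({z : ℂ | 0 ≤ z.im} \ ((fun x : ℝ => (x : ℂ)) '' F)))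
    (hbound : ∀ z : ℂ, 0 ≤ z.im → z ∉ (fun x : ℝ => (x : ℂ)) '' F →
      ∀ i j, ‖H z i j‖ ≤ C * (1 + ‖z‖) ^ (-s))
    (hlog : ∀ a ∈ F, ∃ (C' : ℝ) (U : Set ℂ), U ∈ 𝓝 (a : ℂ) ∧
      ∀ z ∈ U, 0 ≤ z.im → z ∉ (fun x : ℝ => (x : ℂ)) '' F →
      ∀ i j, ‖H z i j‖ ≤ C' * |Real.log (‖z - (a : ℂ)‖)|) :
    ∀ i j, ∫ x : ℝ, H (x : ℂ) i j = 0 :=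
  cauchy_step_general s C hs hC F hF H hanal hcont hbound
end
end

section
/- Unimodularity of the Fokas–Its–Kitaev solution: For every n ≥ 1 and every z ∈ ℂ∖𝓘, p_n(z) q_{n−1}(z) − p_{n−1}(z) q_n(z) = −h_{n−1}/(2πi); equivalently, the Fokas–Its–Kitaev matrix Y(z) := [[p_n(z), q_n(z)], [−(2πi/h_{n−1}) p_{n−1}(z), −(2πi/h_{n−1}) q_{n−1}(z)]] satisfies det Y(z) = 1 identically on ℂ∖𝓘. -/
/-!
Let `A` and `B` be the divided differences of `p_n` and `p_{n-1}` at `z`, i.e. the quotients of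
`p_n` and `p_{n-1}` by `X - z`. Then
`p_n(z) p_{n-1}(x) - p_{n-1}(z) p_n(x) = (x - z) (p_n(x) B(x) - p_{n-1}(x) A(x))`,
so `2πi (p_n q_{n-1} - p_{n-1} q_n)(z) = ∫ p_n B w - ∫ p_{n-1} A w`. Since `deg B < n` and `A` is
monic of degree `n - 1`, orthogonality turns this into `0 - h_{n-1}`.
-/

open Complex Filter Topology MeasureTheory Polynomial

noncomputable section

/-- A finite collection of pairwise disjoint closed intervals of `ℝ`, regarded as the
subset of `ℝ` it covers. -/
def IsIntervalCollection (Iset : Set ℝ) : Prop :=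
  ∃ (m : ℕ) (f : Fin m → Set ℝ), (∀ i, IsClosed (f i) ∧ Convex ℝ (f i) ∧ (f i).Nonempty)
    ∧ Pairwise (Function.onFun Disjoint f) ∧ Iset = ⋃ i, f i

/-- The orthogonal polynomial setup of the Fokas–Its–Kitaev Riemann–Hilbert problem:
`Iset` is a compact finite union of closed pairwise disjoint intervals, `w` an integrable
nonnegative weight on `Iset` which is positive on a set of positive measure, and `p j` are
the monic orthogonal polynomials, `∫_I p_j p_m w = h_j δ_{jm}` with `h_j > 0`. -/
structure OPSetup where
  Iset : Set ℝ
  Iset_intervals : IsIntervalCollection Iset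
  Iset_compact : IsCompact Iset
  w : ℝ → ℝ
  w_nonneg : ∀ x ∈ Iset, 0 ≤ w x
  w_integrable : IntegrableOn w Iset
  w_pos : 0 < volume {x ∈ Iset | 0 < w x}
  p : ℕ → Polynomial ℝ
  p_monic : ∀ j, (p j).Monic
  p_degree : ∀ j, (p j).natDegree = j
  h : ℕ → ℝ
  h_pos : ∀ j, 0 < h j
  orth : ∀ j m : ℕ, ∫ x in Iset, (p j).eval x * (p m).eval x * w x =
    if j = m then h j else 0

namespace OPSetup

/-- The Cauchy transform `q_j(z) = (1/2πi) ∫_I p_j(x) w(x)/(x−z) dx`. -/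
def q (S : OPSetup) (j : ℕ) (z : ℂ) : ℂ :=
  (2 * (Real.pi : ℂ) * Complex.I)⁻¹ *
    ∫ x in S.Iset, (((p S j).eval x * S.w x : ℝ) : ℂ) / ((x : ℂ) - z)

/-- The Fokas–Its–Kitaev matrix `Y`. -/
def Y (S : OPSetup) (n : ℕ) (z : ℂ) : M2 :=
  !![((p S n).eval₂ (algebraMap ℝ ℂ) z), S.q n z;
     -(2 * (Real.pi : ℂ) * Complex.I / (S.h (n - 1) : ℂ)) * ((p S (n-1)).eval₂ (algebraMap ℝ ℂ) z),
     -(2 * (Real.pi : ℂ) * Complex.I / (S.h (n - 1) : ℂ)) * S.q (n - 1) z]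

end OPSetup

namespace Polynomial

variable {R : Type*} [CommRing R]

lemma eval_mul_eval_sub_eval_mul_eval (P Q : R[X]) (x z : R) :
    P.eval z * Q.eval x - Q.eval z * P.eval x =
      (x - z) * (P.eval x * (Q /ₘ (X - C z)).eval x - Q.eval x * (P /ₘ (X - C z)).eval x) := by
  have hdiv : ∀ F : R[X], (x - z) * (F /ₘ (X - C z)).eval x = F.eval x - F.eval z := fun F => by
    simpa [modByMonic_X_sub_C_eq_C_eval] using
      congrArg (eval x) (X_sub_C_mul_divByMonic_eq_sub_modByMonic F z)
  linear_combination Q.eval x * hdiv P - P.eval x * hdiv Q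

lemma Monic.divByMonic_X_sub_C [Nontrivial R] {P : R[X]} (hP : P.Monic) (hdeg : 0 < P.natDegree)
    (z : R) : (P /ₘ (X - C z)).Monic := by
  rw [Monic, leadingCoeff_divByMonic_of_monic (monic_X_sub_C z), hP.leadingCoeff]
  rw [degree_X_sub_C, degree_eq_natDegree hP.ne_zero]
  exact_mod_cast hdeg

end Polynomial

namespace OPSetup

variable (S : OPSetup)

def pC (j : ℕ) : ℂ[X] := (S.p j).map (algebraMap ℝ ℂ)

lemma pC_monic (j : ℕ) : (S.pC j).Monic := (S.p_monic j).map _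

lemma natDegree_pC (j : ℕ) : (S.pC j).natDegree = j := by
  rw [pC, (S.p_monic j).natDegree_map, S.p_degree]

lemma eval_pC_ofReal (j : ℕ) (x : ℝ) : (S.pC j).eval (x : ℂ) = (((S.p j).eval x : ℝ) : ℂ) := by
  rw [pC, eval_map_algebraMap]
  exact (Polynomial.ofReal_eval _ _).symm

def pSeq : Polynomial.Sequence ℂ where
  elems' := S.pC
  degree_eq' j := by rw [degree_eq_natDegree (S.pC_monic j).ne_zero, S.natDegree_pC]

lemma measurableSet_Iset : MeasurableSet S.Iset := S.Iset_compact.isClosed.measurableSet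

lemma integrableOn_mul_weight (j : ℕ) {g : ℝ → ℂ} (hg : ContinuousOn g S.Iset) :
    IntegrableOn (fun x => g x * ((S.p j).eval x * S.w x : ℝ)) S.Iset := by
  have hw : IntegrableOn (fun x => (S.w x : ℂ)) S.Iset := S.w_integrable.ofReal
  have hgp : ContinuousOn (fun x => g x * (S.p j).eval x) S.Iset :=
    hg.mul (continuous_ofReal.comp (S.p j).continuous).continuousOn
  obtain ⟨C, hC⟩ := S.Iset_compact.exists_bound_of_continuousOn hgp
  refine (hw.bdd_mul (hgp.aestronglyMeasurable S.measurableSet_Iset)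
    ((ae_restrict_iff' S.measurableSet_Iset).2 (ae_of_all _ hC))).congr ?_
  exact ae_of_all _ fun x => by push_cast; ring

def moment (j : ℕ) : ℂ[X] →ₗ[ℂ] ℂ where
  toFun Q := ∫ x in S.Iset, Q.eval (x : ℂ) * ((S.p j).eval x * S.w x : ℝ)
  map_add' Q R := by
    simp only [eval_add, add_mul]
    exact integral_add
      (S.integrableOn_mul_weight j (Q.continuous.comp continuous_ofReal).continuousOn)
      (S.integrableOn_mul_weight j (R.continuous.comp continuous_ofReal).continuousOn)
  map_smul' c Q := by
    simp only [eval_smul, smul_eq_mul, mul_assoc, RingHom.id_apply]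
    exact integral_const_mul c _

lemma moment_apply (j : ℕ) (Q : ℂ[X]) :
    S.moment j Q = ∫ x in S.Iset, Q.eval (x : ℂ) * ((S.p j).eval x * S.w x : ℝ) := rfl

lemma moment_pC (j m : ℕ) : S.moment j (S.pC m) = if j = m then (S.h j : ℂ) else 0 := by
  have hreal : S.moment j (S.pC m) =
      ∫ x in S.Iset, (((S.p j).eval x * (S.p m).eval x * S.w x : ℝ) : ℂ) := by
    rw [moment_apply]
    refine integral_congr_ae (ae_of_all _ fun x => ?_)
    simp only [S.eval_pC_ofReal]
    push_cast
    ring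
  rw [hreal, integral_complex_ofReal, S.orth]
  split_ifs <;> simp

lemma moment_eq_zero_of_degree_lt {j : ℕ} {Q : ℂ[X]} (hQ : Q.degree < j) : S.moment j Q = 0 := by
  have hspan : Q ∈ Submodule.span ℂ (S.pSeq '' Set.Iio j) := by
    rw [S.pSeq.span_degreeLT fun i _ => (S.pC_monic i).leadingCoeff ▸ isUnit_one]
    exact mem_degreeLT.2 hQ
  refine (Submodule.span_le (p := LinearMap.ker (S.moment j)) |>.2 ?_) hspan
  rintro _ ⟨i, hi, rfl⟩
  exact (S.moment_pC j i).trans (if_neg (Set.mem_Iio.1 hi).ne')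

lemma moment_eq_h_of_monic {j : ℕ} {Q : ℂ[X]} (hQ : Q.Monic) (hdeg : Q.natDegree = j) :
    S.moment j Q = S.h j := by
  have hlt : (Q - S.pC j).degree < j := by
    have hQj : Q.degree = j := by rw [degree_eq_natDegree hQ.ne_zero, hdeg]
    refine hQj ▸ degree_sub_lt_left ?_ hQ.ne_zero ?_
    · rw [hQj, degree_eq_natDegree (S.pC_monic j).ne_zero, S.natDegree_pC]
    · rw [hQ.leadingCoeff, (S.pC_monic j).leadingCoeff]
  rw [← sub_add_cancel Q (S.pC j), map_add, S.moment_eq_zero_of_degree_lt hlt, S.moment_pC,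
    if_pos rfl, zero_add]

lemma eval_mul_q_sub_eval_mul_q (j k : ℕ) {z : ℂ}
    (hz : z ∉ (fun x : ℝ => (x : ℂ)) '' S.Iset) :
    (S.pC k).eval z * S.q j z - (S.pC j).eval z * S.q k z =
      (2 * (Real.pi : ℂ) * Complex.I)⁻¹ *
        (S.moment k (S.pC j /ₘ (X - C z)) - S.moment j (S.pC k /ₘ (X - C z))) := by
  have hne : ∀ x ∈ S.Iset, (x : ℂ) - z ≠ 0 := fun x hx h => hz ⟨x, hx, sub_eq_zero.1 h⟩
  have hint : ∀ i, IntegrableOn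
      (fun x : ℝ => (((S.p i).eval x * S.w x : ℝ) : ℂ) / ((x : ℂ) - z)) S.Iset := fun i =>
    (S.integrableOn_mul_weight i
      ((continuous_ofReal.sub continuous_const).continuousOn.inv₀ hne)).congr
      (ae_of_all _ fun x => (div_eq_inv_mul _ _).symm)
  have hmoment : ∀ i (Q : ℂ[X]), IntegrableOn
      (fun x : ℝ => Q.eval (x : ℂ) * ((S.p i).eval x * S.w x : ℝ)) S.Iset := fun i Q =>
    S.integrableOn_mul_weight i (Q.continuous.comp continuous_ofReal).continuousOn
  have hpoint : ∀ x ∈ S.Iset,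
      (S.pC k).eval z * ((((S.p j).eval x * S.w x : ℝ) : ℂ) / ((x : ℂ) - z)) -
        (S.pC j).eval z * ((((S.p k).eval x * S.w x : ℝ) : ℂ) / ((x : ℂ) - z)) =
      (S.pC j /ₘ (X - C z)).eval (x : ℂ) * ((S.p k).eval x * S.w x : ℝ) -
        (S.pC k /ₘ (X - C z)).eval (x : ℂ) * ((S.p j).eval x * S.w x : ℝ) := fun x hx => by
    have key := eval_mul_eval_sub_eval_mul_eval (S.pC k) (S.pC j) (x : ℂ) z
    rw [S.eval_pC_ofReal, S.eval_pC_ofReal] at key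
    push_cast
    field_simp [hne x hx]
    linear_combination (S.w x : ℂ) * key
  rw [q, q, moment_apply, moment_apply, ← integral_sub (hmoment _ _) (hmoment _ _),
    ← setIntegral_congr_fun S.measurableSet_Iset hpoint,
    integral_sub ((hint j).const_mul _) ((hint k).const_mul _), integral_const_mul,
    integral_const_mul]
  ring

end OPSetup

/-- **Unimodularity of the Fokas–Its–Kitaev solution.** For every `n ≥ 1` and
`z ∈ ℂ∖𝓘`, `p_n(z) q_{n−1}(z) − p_{n−1}(z) q_n(z) = −h_{n−1}/(2πi)`; equivalently
`det Y(z) = 1` identically on `ℂ∖𝓘`. -/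
theorem FIK_unimodular (S : OPSetup) (n : ℕ) (hn : 1 ≤ n) (z : ℂ)
    (hz : z ∉ (fun x : ℝ => (x : ℂ)) '' S.Iset) :
    ((S.p n).eval₂ (algebraMap ℝ ℂ) z) * S.q (n - 1) z -
      ((S.p (n - 1)).eval₂ (algebraMap ℝ ℂ) z) * S.q n z
      = -(S.h (n - 1) : ℂ) / (2 * (Real.pi : ℂ) * Complex.I) ∧
    (S.Y n z).det = 1 := by
  have hA : (S.pC n /ₘ (X - C z)).Monic :=
    (S.pC_monic n).divByMonic_X_sub_C (by rw [S.natDegree_pC]; omega) z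
  have hAdeg : (S.pC n /ₘ (X - C z)).natDegree = n - 1 := by
    rw [natDegree_divByMonic _ (monic_X_sub_C z), S.natDegree_pC, natDegree_X_sub_C]
  have hBdeg : (S.pC (n - 1) /ₘ (X - C z)).degree < n := by
    refine degree_le_natDegree.trans_lt ?_
    rw [natDegree_divByMonic _ (monic_X_sub_C z), S.natDegree_pC, natDegree_X_sub_C]
    exact_mod_cast (by omega : n - 1 - 1 < n)
  have hcross : ((S.p n).eval₂ (algebraMap ℝ ℂ) z) * S.q (n - 1) z -
      ((S.p (n - 1)).eval₂ (algebraMap ℝ ℂ) z) * S.q n z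
      = -(S.h (n - 1) : ℂ) / (2 * (Real.pi : ℂ) * Complex.I) := by
    rw [← eval_map, ← eval_map, ← OPSetup.pC, ← OPSetup.pC,
      S.eval_mul_q_sub_eval_mul_q (n - 1) n hz, S.moment_eq_zero_of_degree_lt hBdeg,
      S.moment_eq_h_of_monic hA hAdeg]
    ring
  have hinv : 2 * (Real.pi : ℂ) * Complex.I / S.h (n - 1) *
      (S.h (n - 1) / (2 * (Real.pi : ℂ) * Complex.I)) = 1 := by
    field_simp [two_pi_I_ne_zero, ofReal_ne_zero.2 (S.h_pos (n - 1)).ne']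
  refine ⟨hcross, ?_⟩
  rw [OPSetup.Y, Matrix.det_fin_two_of]
  linear_combination (-(2 * (Real.pi : ℂ) * Complex.I / S.h (n - 1))) * hcross + hinv
end
end

section
/- Jump relation of the Fokas–Its–Kitaev solution: Let x₀ lie in the interior of 𝓘 and suppose w is Hölder continuous in a neighbourhood of x₀. Then the boundary values Y_±(x₀) := lim_{ε→0⁺} Y(x₀ ± iε) of the Fokas–Its–Kitaev matrix Y exist and satisfy Y₊(x₀) = Y₋(x₀) · [[1, w(x₀)], [0, 1]]. -/
open Complex Filter Topology MeasureTheory Polynomial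

noncomputable section

/-! The first column of `Y` is polynomial, hence continuous across `𝓘`; all of the jump sits in
the Cauchy transforms `q_j`. On a small interval `[x₀ - δ, x₀ + δ] ⊆ 𝓘` write
`p_j w = (p_j w - (p_j w)(x₀)) + (p_j w)(x₀)`. Thanks to the Hölder bound, the first summand and
the part of `𝓘` away from `x₀` contribute integrals that converge, by dominated convergence, to the
same limit from both half-planes, while `∫_{x₀-δ}^{x₀+δ} dt / (t - x₀ ∓ iε) → ±πi` because
`log (-δ ∓ iε)` approaches the branch cut from the two sides. Hence
`q_{j,+}(x₀) - q_{j,-}(x₀) = p_j(x₀) w(x₀)` (Sokhotski–Plemelj), and this is exactly the second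
column of `Y₊ = Y₋ [[1, w(x₀)], [0, 1]]`. -/

open Set Metric

def cauchyTransform (s : Set ℝ) (f : ℝ → ℂ) (z : ℂ) : ℂ :=
  ∫ t in s, f t / ((t : ℂ) - z)

lemma abs_sub_re_le_norm_ofReal_sub (t : ℝ) (z : ℂ) : |t - z.re| ≤ ‖(t : ℂ) - z‖ := by
  simpa using abs_re_le_norm ((t : ℂ) - z)

lemma abs_im_le_norm_ofReal_sub (t : ℝ) (z : ℂ) : |z.im| ≤ ‖(t : ℂ) - z‖ := by
  simpa using abs_im_le_norm ((t : ℂ) - z)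

lemma ofReal_sub_ne_zero {z : ℂ} (hz : z.im ≠ 0) (t : ℝ) : (t : ℂ) - z ≠ 0 :=
  norm_pos_iff.1 ((abs_pos.2 hz).trans_le (abs_im_le_norm_ofReal_sub t z))

lemma MeasureTheory.IntegrableOn.div_ofReal_sub {s : Set ℝ} {f : ℝ → ℂ} (hf : IntegrableOn f s)
    {z : ℂ} (hz : z.im ≠ 0) : IntegrableOn (fun t => f t / ((t : ℂ) - z)) s := by
  refine (hf.mul_bdd (c := |z.im|⁻¹) (by fun_prop) (ae_of_all _ fun t => ?_)).congr
    (ae_of_all _ fun t => (div_eq_mul_inv _ _).symm)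
  rw [norm_inv]
  exact inv_anti₀ (abs_pos.2 hz) (abs_im_le_norm_ofReal_sub t z)

lemma integral_inv_ofReal_sub {z : ℂ} (hz : z.im ≠ 0) (a b : ℝ) :
    ∫ t in a..b, ((t : ℂ) - z)⁻¹ = Complex.log (b - z) - Complex.log (a - z) := by
  have hslit : ∀ t : ℝ, (t : ℂ) - z ∈ slitPlane := fun t =>
    Or.inr (by simpa using hz)
  refine intervalIntegral.integral_eq_sub_of_hasDerivAt
    (f := fun t : ℝ => Complex.log ((t : ℂ) - z)) (fun t _ => ?_)
    ((Continuous.inv₀ (by fun_prop) (ofReal_sub_ne_zero hz)).intervalIntegrable a b)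
  simpa using (((hasDerivAt_id (t : ℂ)).sub_const z).clog (hslit t)).comp_ofReal

lemma tendsto_log_ofReal_sub_of_lt {x₀ b : ℝ} (h : x₀ < b) :
    Tendsto (fun ε : ℝ => Complex.log (b - (x₀ + ε * I))) (𝓝 0) (𝓝 (Real.log (b - x₀))) := by
  have hlim : Tendsto (fun ε : ℝ => (b : ℂ) - (x₀ + ε * I)) (𝓝 0) (𝓝 ((b - x₀ : ℝ) : ℂ)) := by
    convert (Continuous.tendsto (by fun_prop) 0 :
      Tendsto (fun ε : ℝ => (b : ℂ) - (x₀ + ε * I)) _ _) using 2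
    push_cast; ring
  rw [ofReal_log (sub_pos.2 h).le]
  exact (continuousAt_clog (ofReal_mem_slitPlane.2 (sub_pos.2 h))).tendsto.comp hlim

lemma tendsto_log_ofReal_sub_nhdsGT {a x₀ : ℝ} (h : a < x₀) :
    Tendsto (fun ε : ℝ => Complex.log (a - (x₀ + ε * I))) (𝓝[>] 0)
      (𝓝 (Real.log (x₀ - a) - Real.pi * I)) := by
  have hlim : Tendsto (fun ε : ℝ => (a : ℂ) - (x₀ + ε * I)) (𝓝[>] 0)
      (𝓝[{w | w.im < 0}] ((a - x₀ : ℝ) : ℂ)) := by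
    refine tendsto_nhdsWithin_iff.2 ⟨?_, eventually_nhdsWithin_of_forall fun ε (hε : 0 < ε) => ?_⟩
    · refine Tendsto.mono_left ?_ nhdsWithin_le_nhds
      convert (Continuous.tendsto (by fun_prop) 0 :
        Tendsto (fun ε : ℝ => (a : ℂ) - (x₀ + ε * I)) _ _) using 2
      push_cast; ring
    · simpa using hε
  have hlog := (tendsto_log_nhdsWithin_im_neg_of_re_neg_of_im_zero
    (by simpa using h) (ofReal_im _)).comp hlim
  rwa [norm_real, Real.norm_of_nonpos (by linarith), neg_sub] at hlog

lemma tendsto_log_ofReal_sub_nhdsLT {a x₀ : ℝ} (h : a < x₀) :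
    Tendsto (fun ε : ℝ => Complex.log (a - (x₀ + ε * I))) (𝓝[<] 0)
      (𝓝 (Real.log (x₀ - a) + Real.pi * I)) := by
  have hlim : Tendsto (fun ε : ℝ => (a : ℂ) - (x₀ + ε * I)) (𝓝[<] 0)
      (𝓝[{w | 0 ≤ w.im}] ((a - x₀ : ℝ) : ℂ)) := by
    refine tendsto_nhdsWithin_iff.2 ⟨?_, eventually_nhdsWithin_of_forall fun ε (hε : ε < 0) => ?_⟩
    · refine Tendsto.mono_left ?_ nhdsWithin_le_nhds
      convert (Continuous.tendsto (by fun_prop) 0 :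
        Tendsto (fun ε : ℝ => (a : ℂ) - (x₀ + ε * I)) _ _) using 2
      push_cast; ring
    · simpa using hε.le
  have hlog := (tendsto_log_nhdsWithin_im_nonneg_of_re_neg_of_im_zero
    (by simpa using h) (ofReal_im _)).comp hlim
  rwa [norm_real, Real.norm_of_nonpos (by linarith), neg_sub] at hlog

lemma tendsto_integral_inv_ofReal_sub_nhdsGT {x₀ δ : ℝ} (hδ : 0 < δ) :
    Tendsto (fun ε : ℝ => ∫ t in (x₀ - δ)..(x₀ + δ), ((t : ℂ) - (x₀ + ε * I))⁻¹) (𝓝[>] 0)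
      (𝓝 (Real.pi * I)) := by
  have h := ((tendsto_log_ofReal_sub_of_lt (by linarith : x₀ < x₀ + δ)).mono_left
    nhdsWithin_le_nhds).sub (tendsto_log_ofReal_sub_nhdsGT (by linarith : x₀ - δ < x₀))
  rw [add_sub_cancel_left, sub_sub_cancel, sub_sub_cancel] at h
  refine h.congr' (eventually_nhdsWithin_of_forall fun ε (hε : 0 < ε) => ?_)
  exact (integral_inv_ofReal_sub (by simpa using hε.ne') _ _).symm

lemma tendsto_integral_inv_ofReal_sub_nhdsLT {x₀ δ : ℝ} (hδ : 0 < δ) :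
    Tendsto (fun ε : ℝ => ∫ t in (x₀ - δ)..(x₀ + δ), ((t : ℂ) - (x₀ + ε * I))⁻¹) (𝓝[<] 0)
      (𝓝 (-(Real.pi * I))) := by
  have h := ((tendsto_log_ofReal_sub_of_lt (by linarith : x₀ < x₀ + δ)).mono_left
    nhdsWithin_le_nhds).sub (tendsto_log_ofReal_sub_nhdsLT (by linarith : x₀ - δ < x₀))
  rw [add_sub_cancel_left, sub_sub_cancel, sub_add_cancel_left] at h
  refine h.congr' (eventually_nhdsWithin_of_forall fun ε (hε : ε < 0) => ?_)
  exact (integral_inv_ofReal_sub (by simpa using hε.ne) _ _).symm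

lemma tendsto_ofReal_add_mul (x₀ : ℝ) (c : ℂ) :
    Tendsto (fun ε : ℝ => (x₀ : ℂ) + ε * c) (𝓝 0) (𝓝 x₀) := by
  simpa using (Continuous.tendsto (by fun_prop) 0 :
    Tendsto (fun ε : ℝ => (x₀ : ℂ) + ε * c) _ _)

lemma tendsto_cauchyTransform_of_norm_le_mul_abs_sub {s : Set ℝ} {g : ℝ → ℂ} {G : ℝ → ℝ} {x₀ : ℝ}
    (hg : AEStronglyMeasurable g (volume.restrict s)) (hG : IntegrableOn G s)
    (hgG : ∀ᵐ t ∂volume.restrict s, ‖g t‖ ≤ G t * |t - x₀|) :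
    Tendsto (fun ε : ℝ => cauchyTransform s g (x₀ + ε * I)) (𝓝[≠] 0)
      (𝓝 (cauchyTransform s g x₀)) := by
  refine tendsto_integral_filter_of_dominated_convergence (fun t => ‖G t‖)
    (Eventually.of_forall fun ε => hg.mul (by fun_prop : Measurable fun t : ℝ =>
      ((t : ℂ) - (x₀ + ε * I))⁻¹).aestronglyMeasurable) ?_ hG.norm ?_
  · filter_upwards [self_mem_nhdsWithin] with ε (hε : ε ≠ 0)
    filter_upwards [hgG] with t ht
    have hz : (x₀ + ε * I).im ≠ 0 := by simpa using hε
    rw [norm_div, div_le_iff₀ (norm_pos_iff.2 (ofReal_sub_ne_zero hz t))]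
    calc ‖g t‖ ≤ G t * |t - x₀| := ht
      _ ≤ ‖G t‖ * ‖(t : ℂ) - (x₀ + ε * I)‖ :=
        mul_le_mul (Real.le_norm_self _)
          (by simpa using abs_sub_re_le_norm_ofReal_sub t (x₀ + ε * I))
          (abs_nonneg _) (norm_nonneg _)
  · filter_upwards [hgG] with t ht
    rcases eq_or_ne t x₀ with rfl | hne
    · have hg0 : g t = 0 := by simpa using ht
      simp [hg0]
    · exact tendsto_const_nhds.div (tendsto_const_nhds.sub
        ((tendsto_ofReal_add_mul x₀ I).mono_left nhdsWithin_le_nhds))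
        (sub_ne_zero.2 (ofReal_injective.ne hne))

lemma cauchyTransform_eq_add {K : Set ℝ} {f : ℝ → ℂ} (hf : IntegrableOn f K) {x₀ δ : ℝ}
    (hδ : 0 ≤ δ) (hball : closedBall x₀ δ ⊆ K) {z : ℂ} (hz : z.im ≠ 0) :
    cauchyTransform K f z = cauchyTransform (K \ closedBall x₀ δ) f z
      + cauchyTransform (closedBall x₀ δ) (fun t => f t - f x₀) z
      + f x₀ * ∫ t in (x₀ - δ)..(x₀ + δ), ((t : ℂ) - z)⁻¹ := by
  have hfz := hf.div_ofReal_sub hz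
  have hconst : IntegrableOn (fun _ : ℝ => f x₀) (closedBall x₀ δ) :=
    integrableOn_const measure_closedBall_lt_top.ne
  have hnear : IntegrableOn (fun t => (f t - f x₀) / ((t : ℂ) - z)) (closedBall x₀ δ) :=
    ((hf.mono_set hball).sub hconst).div_ofReal_sub hz
  have hpole : IntegrableOn (fun t : ℝ => f x₀ * ((t : ℂ) - z)⁻¹) (closedBall x₀ δ) :=
    (hconst.div_ofReal_sub hz).congr (ae_of_all _ fun t => div_eq_mul_inv _ _)
  unfold cauchyTransform
  conv_lhs => rw [← sdiff_union_of_subset hball]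
  rw [setIntegral_union disjoint_sdiff_left measurableSet_closedBall (hfz.mono_set sdiff_subset)
    (hfz.mono_set hball), add_assoc, intervalIntegral.integral_of_le (by linarith),
    ← integral_Icc_eq_integral_Ioc, ← Real.closedBall_eq_Icc, ← integral_const_mul,
    ← integral_add hnear hpole]
  congr 1
  exact setIntegral_congr_fun measurableSet_closedBall fun t _ => by ring

lemma integrableOn_abs_sub_rpow {r : ℝ} (hr : -1 < r) (x₀ δ : ℝ) :
    IntegrableOn (fun t : ℝ => |t - x₀| ^ r) (closedBall x₀ δ) := by
  have hloc : LocallyIntegrable (fun x : ℝ => |x| ^ r) :=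
    locallyIntegrable_of_norm_le_rpow (C := 1) (α := -r) (by simp) (by simp; linarith)
      (ae_of_all _ fun x => by simp [abs_of_nonneg (Real.rpow_nonneg (abs_nonneg x) r)])
      (continuous_abs.measurable.pow_const r).aestronglyMeasurable
  have hpre : (fun t => t - x₀) ⁻¹' closedBall 0 δ = closedBall x₀ δ := by
    ext t; simp [Real.dist_eq]
  rw [← hpre]
  exact ((measurePreserving_sub_right volume x₀).integrableOn_comp_preimage
    (Homeomorph.subRight x₀).measurableEmbedding).2
    (hloc.integrableOn_isCompact (isCompact_closedBall 0 δ))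

lemma tendsto_cauchyTransform_of_tendsto_integral_inv {K : Set ℝ} (hK : MeasurableSet K)
    {f : ℝ → ℂ} (hf : IntegrableOn f K) {x₀ δ C β : ℝ} (hδ : 0 < δ) (hβ : 0 < β)
    (hball : closedBall x₀ δ ⊆ K)
    (hHolder : ∀ t ∈ closedBall x₀ δ, ‖f t - f x₀‖ ≤ C * |t - x₀| ^ β)
    {l : Filter ℝ} (hl : l ≤ 𝓝[≠] 0) {c : ℂ}
    (hc : Tendsto (fun ε : ℝ => ∫ t in (x₀ - δ)..(x₀ + δ), ((t : ℂ) - (x₀ + ε * I))⁻¹) l (𝓝 c)) :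
    Tendsto (fun ε : ℝ => cauchyTransform K f (x₀ + ε * I)) l
      (𝓝 (cauchyTransform (K \ closedBall x₀ δ) f x₀
        + cauchyTransform (closedBall x₀ δ) (fun t => f t - f x₀) x₀ + f x₀ * c)) := by
  have hfar := tendsto_cauchyTransform_of_norm_le_mul_abs_sub (x₀ := x₀) (G := fun t => ‖f t‖ / δ)
    (hf.mono_set sdiff_subset).aestronglyMeasurable
    ((hf.mono_set sdiff_subset).norm.div_const δ) <| by
      filter_upwards [ae_restrict_mem (hK.diff measurableSet_closedBall)] with t ht
      have hδt : δ < |t - x₀| := by simpa [Real.dist_eq] using ht.2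
      rw [div_mul_eq_mul_div, le_div_iff₀ hδ]
      exact mul_le_mul_of_nonneg_left hδt.le (norm_nonneg _)
  have hnear := tendsto_cauchyTransform_of_norm_le_mul_abs_sub (x₀ := x₀) (g := fun t => f t - f x₀)
    (G := fun t => C * |t - x₀| ^ (β - 1))
    ((hf.mono_set hball).aestronglyMeasurable.sub aestronglyMeasurable_const)
    ((integrableOn_abs_sub_rpow (by linarith) x₀ δ).const_mul C) <| by
      filter_upwards [ae_restrict_mem measurableSet_closedBall] with t ht
      refine (hHolder t ht).trans_eq ?_
      rcases eq_or_ne t x₀ with rfl | hne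
      · simp [Real.zero_rpow hβ.ne']
      · rw [Real.rpow_sub_one (abs_pos.2 (sub_ne_zero.2 hne)).ne']
        field_simp
  refine (((hfar.add hnear).mono_left hl).add (tendsto_const_nhds.mul hc)).congr' ?_
  filter_upwards [hl self_mem_nhdsWithin] with ε (hε : ε ≠ 0)
  exact (cauchyTransform_eq_add hf hδ.le hball (by simpa using hε)).symm

theorem cauchyTransform_sokhotski_plemelj {K : Set ℝ} (hK : MeasurableSet K) {f : ℝ → ℂ}
    (hf : IntegrableOn f K) {x₀ C β : ℝ} (hx₀ : K ∈ 𝓝 x₀) (hβ : 0 < β)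
    (hHolder : ∀ᶠ t in 𝓝 x₀, ‖f t - f x₀‖ ≤ C * |t - x₀| ^ β) :
    ∃ L : ℂ,
      Tendsto (fun ε : ℝ => cauchyTransform K f (x₀ + ε * I)) (𝓝[>] 0)
        (𝓝 (L + Real.pi * I * f x₀)) ∧
      Tendsto (fun ε : ℝ => cauchyTransform K f (x₀ - ε * I)) (𝓝[>] 0)
        (𝓝 (L - Real.pi * I * f x₀)) := by
  obtain ⟨δ, hδ, hsub⟩ := nhds_basis_closedBall.mem_iff.1 (inter_mem hx₀ hHolder)
  have hball : closedBall x₀ δ ⊆ K := fun t ht => (hsub ht).1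
  have hHolderδ : ∀ t ∈ closedBall x₀ δ, ‖f t - f x₀‖ ≤ C * |t - x₀| ^ β :=
    fun t ht => (hsub ht).2
  have hupper := tendsto_cauchyTransform_of_tendsto_integral_inv hK hf hδ hβ hball hHolderδ
    (nhdsWithin_mono _ fun ε (hε : ε ∈ Ioi 0) => ne_of_gt hε)
    (tendsto_integral_inv_ofReal_sub_nhdsGT hδ)
  have hlower := tendsto_cauchyTransform_of_tendsto_integral_inv hK hf hδ hβ hball hHolderδ
    (nhdsWithin_mono _ fun ε (hε : ε ∈ Iio 0) => ne_of_lt hε)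
    (tendsto_integral_inv_ofReal_sub_nhdsLT hδ)
  have hneg : Tendsto Neg.neg (𝓝[>] (0 : ℝ)) (𝓝[<] 0) := by
    simpa using tendsto_neg_nhdsGT_neg (a := (0 : ℝ))
  -- `L` is the principal value `p.v. ∫_K f t / (t - x₀) dt`, split at `|t - x₀| = δ`.
  refine ⟨cauchyTransform (K \ closedBall x₀ δ) f x₀
    + cauchyTransform (closedBall x₀ δ) (fun t => f t - f x₀) x₀, ?_, ?_⟩
  · convert hupper using 2; ring
  · convert hlower.comp hneg using 2
    · simp [sub_eq_add_neg]
    · ring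

lemma Polynomial.exists_eventually_abs_eval_mul_sub_le (P : ℝ[X]) {w : ℝ → ℝ} {x₀ C β : ℝ}
    (hβ1 : β ≤ 1) (hw : ∀ᶠ t in 𝓝 x₀, |w t - w x₀| ≤ C * |t - x₀| ^ β) :
    ∃ C', ∀ᶠ t in 𝓝 x₀, |P.eval t * w t - P.eval x₀ * w x₀| ≤ C' * |t - x₀| ^ β := by
  obtain ⟨M, hM⟩ := (isCompact_closedBall x₀ 1).exists_bound_of_continuousOn
    P.continuous.continuousOn
  have hloc : LocallyLipschitz fun x : ℝ => P.eval x := by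
    simpa using (P.contDiff_aeval (𝕜 := ℝ) 1).locallyLipschitz
  obtain ⟨Lip, hLip⟩ := hloc.locallyLipschitzOn.exists_lipschitzOnWith_of_compact
    (isCompact_closedBall x₀ 1)
  refine ⟨M * C + Lip * |w x₀|, ?_⟩
  filter_upwards [hw, closedBall_mem_nhds x₀ one_pos] with t hwt ht
  have hPt : |P.eval t| ≤ M := by simpa using hM t ht
  have hlin : |t - x₀| ≤ |t - x₀| ^ β :=
    Real.self_le_rpow_of_le_one (abs_nonneg _) (by simpa [Real.dist_eq] using ht) hβ1
  have hP : |P.eval t - P.eval x₀| ≤ Lip * |t - x₀| ^ β := by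
    refine (?_ : _ ≤ Lip * |t - x₀|).trans (mul_le_mul_of_nonneg_left hlin Lip.2)
    simpa [Real.dist_eq] using hLip.dist_le_mul t ht x₀ (mem_closedBall_self zero_le_one)
  calc |P.eval t * w t - P.eval x₀ * w x₀|
      = |P.eval t * (w t - w x₀) + (P.eval t - P.eval x₀) * w x₀| := by ring_nf
    _ ≤ |P.eval t| * |w t - w x₀| + |P.eval t - P.eval x₀| * |w x₀| := by
      rw [← abs_mul, ← abs_mul]; exact abs_add_le _ _
    _ ≤ M * (C * |t - x₀| ^ β) + Lip * |t - x₀| ^ β * |w x₀| :=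
      add_le_add (mul_le_mul hPt hwt (abs_nonneg _) ((abs_nonneg _).trans hPt))
        (mul_le_mul_of_nonneg_right hP (abs_nonneg _))
    _ = (M * C + Lip * |w x₀|) * |t - x₀| ^ β := by ring

namespace OPSetup

lemma integrableOn_eval_mul_w (S : OPSetup) (j : ℕ) :
    IntegrableOn (fun x => (S.p j).eval x * S.w x) S.Iset := by
  obtain ⟨M, hM⟩ := S.Iset_compact.exists_bound_of_continuousOn (S.p j).continuous.continuousOn
  exact S.w_integrable.bdd_mul (S.p j).continuous.aestronglyMeasurable
    (ae_restrict_of_forall_mem S.Iset_compact.isClosed.measurableSet hM)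

theorem exists_tendsto_q (S : OPSetup) (j : ℕ) {x₀ C β : ℝ} (hx₀ : x₀ ∈ interior S.Iset)
    (hβ : 0 < β) (hβ1 : β ≤ 1) (hw : ∀ᶠ t in 𝓝 x₀, |S.w t - S.w x₀| ≤ C * |t - x₀| ^ β) :
    ∃ qp qm : ℂ,
      Tendsto (fun ε : ℝ => S.q j (x₀ + ε * I)) (𝓝[>] 0) (𝓝 qp) ∧
      Tendsto (fun ε : ℝ => S.q j (x₀ - ε * I)) (𝓝[>] 0) (𝓝 qm) ∧
      qp = qm + (((S.p j).eval x₀ * S.w x₀ : ℝ) : ℂ) := by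
  obtain ⟨C', hC'⟩ := (S.p j).exists_eventually_abs_eval_mul_sub_le hβ1 hw
  obtain ⟨L, hupper, hlower⟩ := cauchyTransform_sokhotski_plemelj
    (f := fun x => (((S.p j).eval x * S.w x : ℝ) : ℂ)) S.Iset_compact.isClosed.measurableSet
    (S.integrableOn_eval_mul_w j).ofReal (mem_interior_iff_mem_nhds.1 hx₀) hβ <| by
      filter_upwards [hC'] with t ht
      rwa [← ofReal_sub, norm_real, Real.norm_eq_abs]
  refine ⟨_, _, hupper.const_mul (2 * (Real.pi : ℂ) * I)⁻¹,
    hlower.const_mul (2 * (Real.pi : ℂ) * I)⁻¹, ?_⟩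
  field_simp
  ring

end OPSetup

lemma tendsto_matrix_fin_two {α R : Type*} [TopologicalSpace R] {l : Filter α}
    {a b c d : α → R} {a₀ b₀ c₀ d₀ : R} (ha : Tendsto a l (𝓝 a₀)) (hb : Tendsto b l (𝓝 b₀))
    (hc : Tendsto c l (𝓝 c₀)) (hd : Tendsto d l (𝓝 d₀)) :
    Tendsto (fun x => !![a x, b x; c x, d x]) l (𝓝 !![a₀, b₀; c₀, d₀]) := by
  refine tendsto_pi_nhds.2 fun i => tendsto_pi_nhds.2 fun j => ?_
  fin_cases i <;> fin_cases j <;> assumption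

lemma OPSetup.tendsto_Y (S : OPSetup) (n : ℕ) {l : Filter ℝ} {z : ℝ → ℂ} {x₀ : ℝ}
    (hz : Tendsto z l (𝓝 x₀)) {a b : ℂ} (ha : Tendsto (fun ε => S.q n (z ε)) l (𝓝 a))
    (hb : Tendsto (fun ε => S.q (n - 1) (z ε)) l (𝓝 b)) :
    Tendsto (fun ε => S.Y n (z ε)) l
      (𝓝 !![(((S.p n).eval x₀ : ℝ) : ℂ), a;
        -(2 * (Real.pi : ℂ) * I / (S.h (n - 1) : ℂ)) * (((S.p (n - 1)).eval x₀ : ℝ) : ℂ),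
        -(2 * (Real.pi : ℂ) * I / (S.h (n - 1) : ℂ)) * b]) := by
  have hpoly : ∀ m, Tendsto (fun ε => (S.p m).eval₂ (algebraMap ℝ ℂ) (z ε)) l
      (𝓝 (((S.p m).eval x₀ : ℝ) : ℂ)) := fun m => by
    rw [show (((S.p m).eval x₀ : ℝ) : ℂ) = (S.p m).eval₂ (algebraMap ℝ ℂ) x₀ from
      (eval₂_at_apply (algebraMap ℝ ℂ) x₀).symm]
    exact (((S.p m).continuous_eval₂ (algebraMap ℝ ℂ)).tendsto (x₀ : ℂ)).comp hz
  exact tendsto_matrix_fin_two (hpoly n) ha ((hpoly _).const_mul _) (hb.const_mul _)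

theorem FIK_jump_general (S : OPSetup) (n : ℕ) (x₀ : ℝ) (hx₀ : x₀ ∈ interior S.Iset)
    (hHolder : ∃ (ε CH β : ℝ), 0 < ε ∧ 0 < CH ∧ 0 < β ∧ β ≤ 1 ∧
      ∀ x ∈ Set.Ioo (x₀ - ε) (x₀ + ε), ∀ y ∈ Set.Ioo (x₀ - ε) (x₀ + ε),
        |S.w x - S.w y| ≤ CH * |x - y| ^ β) :
    ∃ Yp Ym : M2,
      Tendsto (fun ε : ℝ => S.Y n ((x₀ : ℂ) + ε * Complex.I)) (𝓝[>] 0) (𝓝 Yp) ∧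
      Tendsto (fun ε : ℝ => S.Y n ((x₀ : ℂ) - ε * Complex.I)) (𝓝[>] 0) (𝓝 Ym) ∧
      Yp = Ym * !![1, (S.w x₀ : ℂ); 0, 1] := by
  obtain ⟨ε, CH, β, hε, -, hβ, hβ1, hw⟩ := hHolder
  have hwx₀ : ∀ᶠ t in 𝓝 x₀, |S.w t - S.w x₀| ≤ CH * |t - x₀| ^ β := by
    filter_upwards [Ioo_mem_nhds (by linarith : x₀ - ε < x₀) (by linarith : x₀ < x₀ + ε)]
      with t ht using hw t ht x₀ ⟨by linarith, by linarith⟩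
  obtain ⟨qp, qm, hqp, hqm, hjump⟩ := S.exists_tendsto_q n hx₀ hβ hβ1 hwx₀
  obtain ⟨qp', qm', hqp', hqm', hjump'⟩ := S.exists_tendsto_q (n - 1) hx₀ hβ hβ1 hwx₀
  have hpath (c : ℂ) : Tendsto (fun ε : ℝ => (x₀ : ℂ) + ε * c) (𝓝[>] 0) (𝓝 x₀) :=
    (tendsto_ofReal_add_mul x₀ c).mono_left nhdsWithin_le_nhds
  refine ⟨_, _, S.tendsto_Y n (hpath I) hqp hqp',
    S.tendsto_Y n (by simpa [sub_eq_add_neg] using hpath (-I)) hqm hqm', ?_⟩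
  rw [Matrix.mul_fin_two, hjump, hjump']
  push_cast
  ext i j
  fin_cases i <;> fin_cases j <;>
    simp only [Fin.zero_eta, Fin.mk_one, Fin.isValue, Matrix.of_apply, Matrix.cons_val',
      Matrix.cons_val_zero, Matrix.cons_val_one, Matrix.cons_val_fin_one, mul_one, mul_zero,
      add_zero] <;> ring

/-- **Jump relation of the Fokas–Its–Kitaev solution.** If `x₀` lies in the interior of `𝓘`
and `w` is Hölder continuous near `x₀`, then the boundary values `Y_±(x₀)` of `Y` from the
upper and lower half-planes exist and satisfy `Y₊(x₀) = Y₋(x₀)·[[1, w(x₀)],[0,1]]`. -/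
theorem FIK_jump (S : OPSetup) (n : ℕ) (hn : 1 ≤ n) (x₀ : ℝ) (hx₀ : x₀ ∈ interior S.Iset)
    (hHolder : ∃ (ε CH β : ℝ), 0 < ε ∧ 0 < CH ∧ 0 < β ∧ β ≤ 1 ∧
      ∀ x ∈ Set.Ioo (x₀ - ε) (x₀ + ε), ∀ y ∈ Set.Ioo (x₀ - ε) (x₀ + ε),
        |S.w x - S.w y| ≤ CH * |x - y| ^ β) :
    ∃ Yp Ym : M2,
      Tendsto (fun ε : ℝ => S.Y n ((x₀ : ℂ) + ε * Complex.I)) (𝓝[>] 0) (𝓝 Yp) ∧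
      Tendsto (fun ε : ℝ => S.Y n ((x₀ : ℂ) - ε * Complex.I)) (𝓝[>] 0) (𝓝 Ym) ∧
      Yp = Ym * !![1, (S.w x₀ : ℂ); 0, 1] :=
  FIK_jump_general S n x₀ hx₀ hHolder
end
end

section
/- Jump of the g-function (property g3): Let μ be a Borel probability measure on ℝ with compact support, let p := sup(supp μ), and define g(z) := ∫ log(z−s) dμ(s) for z ∈ ℂ∖(−∞, p], with the principal branch of the logarithm. Then for every x ∈ ℝ with μ({x}) = 0 and ∫ |log|x−s|| dμ(s) < ∞, the boundary values g_±(x) := lim_{ε→0⁺} g(x ± iε) exist and g₊(x) − g₋(x) = 2πi · μ((x, p]). -/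
open Complex ComplexConjugate Filter Topology MeasureTheory

noncomputable section

/-!
For `s ≠ x`, `log (x - s ± iε)` tends to `log (x - s)` from above and to its conjugate from
below, and `|log (x - s ± iε)| ≤ |log |x - s|| + log 2 + π` for `ε ≤ 1`, so by dominated
convergence (the atom-free point `x` is excluded `μ`-a.e.) `g₊(x) = ∫ log (x - s) dμ` and
`g₋(x) = conj g₊(x)`. The jump is therefore `2i · Im g₊(x) = 2i ∫ arg (x - s) dμ(s)`, and
`arg (x - s)` is `π` for `s > x` and `0` otherwise.
-/

theorem Real.abs_log_le_of_le_add_one {a t : ℝ} (ha : 0 < a) (hat : a ≤ t) (hta : t ≤ a + 1) :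
    |Real.log t| ≤ |Real.log a| + Real.log 2 := by
  have hlog2 : 0 ≤ Real.log 2 := Real.log_nonneg one_le_two
  have hlower : Real.log a ≤ Real.log t := Real.log_le_log ha hat
  have hupper : Real.log t ≤ |Real.log a| + Real.log 2 := by
    rcases le_total a 1 with ha1 | ha1
    · calc Real.log t ≤ Real.log 2 := Real.log_le_log (ha.trans_le hat) (by linarith)
        _ ≤ |Real.log a| + Real.log 2 := le_add_of_nonneg_left (abs_nonneg _)
    · calc Real.log t ≤ Real.log (2 * a) := Real.log_le_log (ha.trans_le hat) (by linarith)
        _ = Real.log a + Real.log 2 := by rw [Real.log_mul two_ne_zero ha.ne', add_comm]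
        _ ≤ |Real.log a| + Real.log 2 := by gcongr; exact le_abs_self _
  rw [abs_le]
  constructor <;> linarith [neg_abs_le (Real.log a)]


namespace Complex

theorem norm_log_le_of_abs_im_le_one {z : ℂ} (hre : z.re ≠ 0) (him : |z.im| ≤ 1) :
    ‖log z‖ ≤ |Real.log (_root_.abs z.re)| + Real.log 2 + Real.pi := by
  have hnorm : |Real.log ‖z‖| ≤ |Real.log (_root_.abs z.re)| + Real.log 2 :=
    Real.abs_log_le_of_le_add_one (abs_pos.2 hre) (abs_re_le_norm z)
      ((norm_le_abs_re_add_abs_im z).trans (by linarith))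
  calc ‖log z‖ ≤ |(log z).re| + |(log z).im| := norm_le_abs_re_add_abs_im _
    _ = |Real.log ‖z‖| + |arg z| := by rw [log_re, log_im]
    _ ≤ |Real.log (_root_.abs z.re)| + Real.log 2 + Real.pi :=
      add_le_add hnorm (abs_arg_le_pi z)

theorem continuousWithinAt_log_im_nonneg_ofReal {c : ℝ} (hc : c ≠ 0) :
    ContinuousWithinAt log {z : ℂ | 0 ≤ z.im} c := by
  rcases hc.lt_or_gt with hneg | hpos
  · exact continuousWithinAt_log_of_re_neg_of_im_zero (by simpa using hneg) (ofReal_im c)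
  · exact (continuousAt_clog (Or.inl (by simpa using hpos))).continuousWithinAt

theorem tendsto_log_ofReal_add_mul_I {c : ℝ} (hc : c ≠ 0) :
    Tendsto (fun ε : ℝ => log (c + ε * I)) (𝓝[>] 0) (𝓝 (log c)) := by
  have hcont : Tendsto (fun ε : ℝ => (c : ℂ) + ε * I) (𝓝[>] 0) (𝓝 (c : ℂ)) := by
    refine (Continuous.tendsto' ?_ 0 _ (by simp)).mono_left nhdsWithin_le_nhds
    fun_prop
  have hmem : ∀ᶠ ε : ℝ in 𝓝[>] 0, (c : ℂ) + ε * I ∈ {z : ℂ | 0 ≤ z.im} := by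
    filter_upwards [self_mem_nhdsWithin] with ε hε
    simpa using le_of_lt hε
  exact (continuousWithinAt_log_im_nonneg_ofReal hc).tendsto.comp
    (tendsto_nhdsWithin_iff.2 ⟨hcont, hmem⟩)

theorem tendsto_log_ofReal_sub_mul_I {c : ℝ} (hc : c ≠ 0) :
    Tendsto (fun ε : ℝ => log (c - ε * I)) (𝓝[>] 0) (𝓝 (conj (log c))) := by
  refine ((continuous_conj.tendsto _).comp (tendsto_log_ofReal_add_mul_I hc)).congr' ?_
  filter_upwards [self_mem_nhdsWithin] with ε hε
  have harg : arg (c + ε * I) ≠ Real.pi := by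
    rw [Ne, arg_eq_pi_iff]
    simpa using fun _ => (ne_of_gt hε)
  simp [← log_conj _ harg, sub_eq_add_neg]

theorem arg_ofReal_sub (x s : ℝ) :
    arg ((x - s : ℝ) : ℂ) = (Set.Ioi x).indicator (fun _ => Real.pi) s := by
  by_cases hs : x < s
  · rw [Set.indicator_of_mem (Set.mem_Ioi.2 hs), arg_ofReal_of_neg (sub_neg.2 hs)]
  · rw [Set.indicator_of_notMem (mt Set.mem_Ioi.1 hs),
      arg_ofReal_of_nonneg (sub_nonneg.2 (not_lt.1 hs))]

end Complex

section BoundaryValues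

variable {μ : Measure ℝ} {x : ℝ}

theorem tendsto_integral_log_sub {l : Filter ℝ} [l.IsCountablyGenerated] [IsFiniteMeasure μ]
    (hx_atom : μ {x} = 0) (hx_log : Integrable (fun s : ℝ => |Real.log (_root_.abs (x - s))|) μ)
    {z : ℝ → ℂ} (hz : ∀ᶠ ε in l, (z ε).re = x ∧ |(z ε).im| ≤ 1) {F : ℝ → ℂ}
    (hF : ∀ s ≠ x, Tendsto (fun ε => log (z ε - s)) l (𝓝 (F s))) :
    Tendsto (fun ε => ∫ s, log (z ε - s) ∂μ) l (𝓝 (∫ s, F s ∂μ)) := by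
  have hne : ∀ᵐ s ∂μ, s ≠ x := measure_eq_zero_iff_ae_notMem.1 hx_atom
  refine tendsto_integral_filter_of_dominated_convergence
    (fun s => |Real.log (_root_.abs (x - s))| + Real.log 2 + Real.pi)
    (Eventually.of_forall fun ε => (measurable_log.comp
      (measurable_const.sub measurable_ofReal)).aestronglyMeasurable) ?_
    ((hx_log.add (integrable_const _)).add (integrable_const _))
    (hne.mono hF)
  filter_upwards [hz] with ε ⟨hre, him⟩
  filter_upwards [hne] with s hs
  simpa [hre] using norm_log_le_of_abs_im_le_one (z := z ε - s)
    (by simpa [hre, sub_eq_zero] using hs.symm) (by simpa using him)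

theorem integrable_log_ofReal_sub [IsFiniteMeasure μ] (hx_atom : μ {x} = 0)
    (hx_log : Integrable (fun s : ℝ => |Real.log (_root_.abs (x - s))|) μ) :
    Integrable (fun s : ℝ => log ((x - s : ℝ) : ℂ)) μ := by
  refine ((hx_log.add (integrable_const (Real.log 2))).add (integrable_const Real.pi)).mono'
    (measurable_log.comp (measurable_ofReal.comp
      (measurable_const.sub measurable_id))).aestronglyMeasurable ?_
  filter_upwards [measure_eq_zero_iff_ae_notMem.1 hx_atom] with s hs
  simpa using norm_log_le_of_abs_im_le_one (z := ((x - s : ℝ) : ℂ))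
    (by simpa [sub_eq_zero] using Ne.symm hs) (by simp)

theorem integral_log_ofReal_sub_sub_conj
    (hint : Integrable (fun s : ℝ => log ((x - s : ℝ) : ℂ)) μ) :
    (∫ s, log ((x - s : ℝ) : ℂ) ∂μ) - conj (∫ s, log ((x - s : ℝ) : ℂ) ∂μ) =
      2 * Real.pi * I * μ.real (Set.Ioi x) := by
  have him : ∫ s, (log ((x - s : ℝ) : ℂ)).im ∂μ =
      (∫ s, log ((x - s : ℝ) : ℂ) ∂μ).im :=
    integral_im hint
  rw [sub_conj, ← him]
  simp only [log_im, arg_ofReal_sub]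
  rw [integral_indicator_const _ measurableSet_Ioi, smul_eq_mul]
  push_cast
  ring

end BoundaryValues

theorem measure_Ioi_eq_measure_Ioc {μ : Measure ℝ} {p : ℝ} (hp : μ (Set.Ioi p) = 0)
    (x : ℝ) :
    μ (Set.Ioi x) = μ (Set.Ioc x p) := by
  rw [← Set.Ioi_sdiff_Ioi, measure_sdiff_null hp]

theorem g_function_jump_general (μ : Measure ℝ) [IsProbabilityMeasure μ]
    (p : ℝ) (hp_null : μ (Set.Ioi p) = 0)
    (g : ℂ → ℂ) (hg : ∀ z : ℂ, g z = ∫ s : ℝ, Complex.log (z - (s : ℂ)) ∂μ)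
    (x : ℝ) (hx_atom : μ {x} = 0)
    (hx_log : Integrable (fun s : ℝ => |Real.log (_root_.abs (x - s))|) μ) :
    ∃ gp gm : ℂ,
      Tendsto (fun ε : ℝ => g ((x : ℂ) + ε * Complex.I)) (𝓝[>] 0) (𝓝 gp) ∧
      Tendsto (fun ε : ℝ => g ((x : ℂ) - ε * Complex.I)) (𝓝[>] 0) (𝓝 gm) ∧
      gp - gm = 2 * (Real.pi : ℂ) * Complex.I * ((μ (Set.Ioc x p)).toReal : ℂ) := by
  have hε : ∀ᶠ ε : ℝ in 𝓝[>] 0, |ε| ≤ 1 := by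
    filter_upwards [Ioc_mem_nhdsGT one_pos] with ε hε
    exact abs_le.2 ⟨by linarith [hε.1], hε.2⟩
  refine ⟨∫ s, log ((x - s : ℝ) : ℂ) ∂μ, conj (∫ s, log ((x - s : ℝ) : ℂ) ∂μ),
    ?_, ?_, ?_⟩
  · simp_rw [hg]
    refine tendsto_integral_log_sub hx_atom hx_log (hε.mono fun ε h => by simpa using h)
      fun s hs => ?_
    simpa [add_sub_right_comm] using
      tendsto_log_ofReal_add_mul_I (c := x - s) (sub_ne_zero.2 hs.symm)
  · simp_rw [hg, ← integral_conj]
    refine tendsto_integral_log_sub hx_atom hx_log (hε.mono fun ε h => by simpa using h)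
      fun s hs => ?_
    simpa [sub_right_comm] using
      tendsto_log_ofReal_sub_mul_I (c := x - s) (sub_ne_zero.2 hs.symm)
  · rw [integral_log_ofReal_sub_sub_conj (integrable_log_ofReal_sub hx_atom hx_log),
      measureReal_def, measure_Ioi_eq_measure_Ioc hp_null]

/-- **Jump of the g-function (property g3).** Let `μ` be a compactly supported Borel
probability measure on `ℝ`, let `p = sup (supp μ)`, and let
`g(z) = ∫ log(z−s) dμ(s)` with the principal branch of the logarithm (analytic on
`ℂ∖(−∞,p]`).  Then for every `x ∈ ℝ` with `μ({x}) = 0` and `∫ |log|x−s|| dμ(s) < ∞`, the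
boundary values `g_±(x)` from above and below exist and
`g₊(x) − g₋(x) = 2πi·μ((x,p])`. -/
theorem g_function_jump (μ : Measure ℝ) [IsProbabilityMeasure μ]
    (hcpt : ∃ a b : ℝ, μ (Set.Icc a b)ᶜ = 0)
    (p : ℝ) (hp_sup : ∀ ε > 0, 0 < μ (Set.Ioc (p - ε) p)) (hp_null : μ (Set.Ioi p) = 0)
    (g : ℂ → ℂ) (hg : ∀ z : ℂ, g z = ∫ s : ℝ, Complex.log (z - (s : ℂ)) ∂μ)
    (x : ℝ) (hx_atom : μ {x} = 0)
    (hx_log : Integrable (fun s : ℝ => |Real.log (_root_.abs (x - s))|) μ) :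
    ∃ gp gm : ℂ,
      Tendsto (fun ε : ℝ => g ((x : ℂ) + ε * Complex.I)) (𝓝[>] 0) (𝓝 gp) ∧
      Tendsto (fun ε : ℝ => g ((x : ℂ) - ε * Complex.I)) (𝓝[>] 0) (𝓝 gm) ∧
      gp - gm = 2 * (Real.pi : ℂ) * Complex.I * ((μ (Set.Ioc x p)).toReal : ℂ) :=
  g_function_jump_general μ p hp_null g hg x hx_atom hx_log

end
end
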